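/- arXiv:1504.07332 — 2 statements merged into one kernel-verified Lean document; each statement's English description precedes it below -/
import Mathlib

section
/- Let H be a Hilbert space, (u_j)_{j∈ℕ} an orthonormal basis of H, and T a bounded linear operator on H with T u_j = E_j u_j for real numbers E_j. Let E' ∈ ℝ, c > 0, ε₁ > 0, and let v ∈ H be a unit vector with ‖(T − E') v‖ < ε₁. Let U be the closed linear span of { u_j : |E_j − E'| ≤ c }. Then ‖π_U(v)‖² > 1 − ε₁²/c². -/
/-!
In the eigenbasis, `(T - E') v` has coefficients `(E_j - E') ⟪u_j, v⟫`, while the component of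
`v` orthogonal to `U` keeps exactly the coefficients `⟪u_j, v⟫` with `|E_j - E'| > c`. Parseval
therefore gives `c ‖π_{U⊥} v‖ ≤ ‖(T - E') v‖ < ε₁`, and Pythagoras
`1 = ‖π_U v‖² + ‖π_{U⊥} v‖²` concludes.
-/

open Submodule

namespace HilbertBasis

variable {ι 𝕜 E : Type*} [RCLike 𝕜] [NormedAddCommGroup E] [InnerProductSpace 𝕜 E]
  (b : HilbertBasis ι 𝕜 E)

theorem hasSum_norm_repr_sq (x : E) : HasSum (fun i => ‖b.repr x i‖ ^ 2) (‖x‖ ^ 2) := by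
  simpa [Real.rpow_two] using lp.hasSum_norm (p := 2) (by norm_num) (b.repr x)

theorem mul_norm_le_of_forall_mul_norm_repr_le {c : ℝ} (hc : 0 ≤ c) {x y : E}
    (h : ∀ i, c * ‖b.repr y i‖ ≤ ‖b.repr x i‖) : c * ‖y‖ ≤ ‖x‖ := by
  have hsq : ∀ i, c ^ 2 * ‖b.repr y i‖ ^ 2 ≤ ‖b.repr x i‖ ^ 2 := fun i => by
    rw [← mul_pow]; exact pow_le_pow_left₀ (by positivity) (h i) 2
  have := hasSum_le hsq ((b.hasSum_norm_repr_sq y).mul_left _) (b.hasSum_norm_repr_sq x)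
  rw [← mul_pow] at this
  exact (pow_le_pow_iff_left₀ (by positivity) (norm_nonneg _) two_ne_zero).mp this

theorem repr_apply_of_hasSum {f : ι → 𝕜} {x : E} (h : HasSum (fun j => f j • b j) x) (i : ι) :
    b.repr x i = f i := by
  classical
  have := h.mapL (innerSL 𝕜 (b i))
  simp only [innerSL_apply_apply, inner_smul_right, orthonormal_iff_ite.mp b.orthonormal i,
    mul_ite, mul_one, mul_zero] at this
  rw [b.repr_apply_apply]
  simpa using this.unique (hasSum_single i fun j hj => by simp [Ne.symm hj])

theorem repr_apply_of_apply_eq_smul {T : E →L[𝕜] E} {μ : ι → 𝕜} (hT : ∀ i, T (b i) = μ i • b i)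
    (x : E) (i : ι) : b.repr (T x) i = μ i * b.repr x i := by
  refine b.repr_apply_of_hasSum (f := fun j => μ j * b.repr x j) ?_ i
  simpa [hT, smul_smul, mul_comm] using (b.hasSum_repr x).mapL T

theorem repr_starProjection_orthogonal_span_image [CompleteSpace E] (S : Set ι) (x : E) (i : ι) :
    b.repr ((span 𝕜 (b '' S)).topologicalClosureᗮ.starProjection x) i =
      Sᶜ.indicator (b.repr x) i := by
  set U := (span 𝕜 (b '' S)).topologicalClosure
  by_cases hi : i ∈ S
  · rw [Set.indicator_of_notMem (by simpa using hi), b.repr_apply_apply]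
    have hbi : b i ∈ U := le_topologicalClosure _ (subset_span ⟨i, hi, rfl⟩)
    exact inner_right_of_mem_orthogonal hbi (Uᗮ.starProjection_apply_mem x)
  · rw [Set.indicator_of_mem hi, b.repr_apply_apply, b.repr_apply_apply]
    have hortho : span 𝕜 {b i} ⟂ span 𝕜 (b '' S) := isOrtho_span.mpr <| by
      rintro _ rfl _ ⟨j, hj, rfl⟩
      exact b.orthonormal.2 (ne_of_mem_of_not_mem hj hi).symm
    have hbi : b i ∈ Uᗮ := by
      rw [orthogonal_closure]
      exact hortho.le (mem_span_singleton_self _)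
    exact inner_orthogonalProjectionOnto_eq_of_mem_left ⟨b i, hbi⟩ x

theorem mul_norm_starProjection_orthogonal_le [CompleteSpace E] {T : E →L[𝕜] E} {μ : ι → ℝ}
    (hT : ∀ i, T (b i) = (μ i : 𝕜) • b i) (μ₀ : ℝ) {c : ℝ} (hc : 0 ≤ c) (x : E) :
    c * ‖(span 𝕜 (b '' {i | |μ i - μ₀| ≤ c})).topologicalClosureᗮ.starProjection x‖ ≤
      ‖T x - (μ₀ : 𝕜) • x‖ := by
  refine b.mul_norm_le_of_forall_mul_norm_repr_le hc fun i => ?_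
  rw [repr_starProjection_orthogonal_span_image, map_sub, map_smul]
  by_cases hi : |μ i - μ₀| ≤ c
  · rw [Set.indicator_of_notMem (by simpa using hi)]
    simp
  · rw [Set.indicator_of_mem hi]
    simp only [lp.coeFn_sub, lp.coeFn_smul, Pi.sub_apply, Pi.smul_apply, smul_eq_mul,
      b.repr_apply_of_apply_eq_smul hT, ← sub_mul, norm_mul]
    have : c ≤ ‖(μ i : 𝕜) - μ₀‖ := by
      rw [← RCLike.ofReal_sub, RCLike.norm_ofReal]; exact (not_le.mp hi).le
    gcongr

end HilbertBasis

theorem stmt1_general {H : Type*} [NormedAddCommGroup H] [InnerProductSpace ℂ H] [CompleteSpace H]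
    (T : H →L[ℂ] H) (u : ℕ → H) (E : ℕ → ℝ)
    (hON : Orthonormal ℂ u)
    (hcomplete : (Submodule.span ℂ (Set.range u)).topologicalClosure = ⊤)
    (hEig : ∀ j, T (u j) = (E j : ℂ) • u j)
    (E' c ε₁ : ℝ) (hc : 0 < c)
    (v : H) (hv : ‖v‖ = 1) (hquasi : ‖T v - (E' : ℂ) • v‖ < ε₁) :
    1 - ε₁ ^ 2 / c ^ 2 <
      ‖(Submodule.orthogonalProjection
          (Submodule.span ℂ (u '' {j : ℕ | |E j - E'| ≤ c})).topologicalClosure v : H)‖ ^ 2 := by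
  let b : HilbertBasis ℕ ℂ H := HilbertBasis.mk hON hcomplete.ge
  have hb : ⇑b = u := HilbertBasis.coe_mk hON hcomplete.ge
  set U := (span ℂ (u '' {j : ℕ | |E j - E'| ≤ c})).topologicalClosure
  have hpyth := norm_sq_eq_add_norm_sq_starProjection v U
  have hfar : c * ‖Uᗮ.starProjection v‖ < ε₁ := by
    have := b.mul_norm_starProjection_orthogonal_le (hb ▸ hEig) E' hc.le v
    rw [hb] at this
    exact this.trans_lt hquasi
  have hfar_sq : ‖Uᗮ.starProjection v‖ ^ 2 < ε₁ ^ 2 / c ^ 2 := by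
    rw [lt_div_iff₀ (by positivity), ← mul_pow, mul_comm]
    exact pow_lt_pow_left₀ hfar (by positivity) two_ne_zero
  rw [hv, one_pow] at hpyth
  show 1 - ε₁ ^ 2 / c ^ 2 < ‖U.starProjection v‖ ^ 2
  linarith

/-- Let `(u_j)` be an orthonormal basis of a Hilbert space `H` and `T` a bounded
operator with `T u_j = E_j u_j`. If `v` is a unit vector with `‖(T − E')v‖ < ε₁` and `U` is
the closed linear span of `{u_j : |E_j − E'| ≤ c}` with `c > 0`, then
`‖π_U v‖² > 1 − ε₁²/c²`. -/
theorem stmt1 {H : Type*} [NormedAddCommGroup H] [InnerProductSpace ℂ H] [CompleteSpace H]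
    (T : H →L[ℂ] H) (u : ℕ → H) (E : ℕ → ℝ)
    (hON : Orthonormal ℂ u)
    (hcomplete : (Submodule.span ℂ (Set.range u)).topologicalClosure = ⊤)
    (hEig : ∀ j, T (u j) = (E j : ℂ) • u j)
    (E' c ε₁ : ℝ) (hc : 0 < c) (hε₁ : 0 < ε₁)
    (v : H) (hv : ‖v‖ = 1) (hquasi : ‖T v - (E' : ℂ) • v‖ < ε₁) :
    1 - ε₁ ^ 2 / c ^ 2 <
      ‖(Submodule.orthogonalProjection
          (Submodule.span ℂ (u '' {j : ℕ | |E j - E'| ≤ c})).topologicalClosure v : H)‖ ^ 2 :=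
  stmt1_general T u E hON hcomplete hEig E' c ε₁ hc v hv hquasi
end

section
/- Let S ⊆ ℕ have positive upper density, let δ > 0, and for each n ∈ S let B_n ⊆ (0, 2] be a Lebesgue measurable set with measure m(B_n) > δ. Then there exists t ∈ (0, 2] such that the set { n ∈ S : t ∈ B_n } has positive upper density; in particular, it is infinite. -/
open MeasureTheory Filter
open scoped ENNReal

/-!
Let `f n t` be the proportion of the `k ≤ n` with `k ∈ S` and `t ∈ B k`. Integrating the
counting function in `t` gives `∫ f n ≥ δ · #(S ∩ [0, n]) / n`, so `limsup ∫ f n ≥ δ · d̄(S) > 0`.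
Since `f n ≤ 2` and `f n` vanishes off `(0, 2]`, the reverse Fatou lemma gives
`∫ limsup f n ≥ limsup ∫ f n > 0`, hence `limsup f n t > 0` for some `t`. That limsup is the upper
density of `{n ∈ S | t ∈ B n}`, and a finite set has upper density zero.
-/

noncomputable def densityRatio (A : Set ℕ) (n : ℕ) : ℝ :=
  ({k | k ≤ n ∧ k ∈ A}.ncard : ℝ) / n

noncomputable def upperDensity (A : Set ℕ) : ℝ :=
  limsup (densityRatio A) atTop

lemma ncard_le_and_eq_card_filter (P : ℕ → Prop) [DecidablePred P] (n : ℕ) :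
    {k | k ≤ n ∧ P k}.ncard = ((Finset.range (n + 1)).filter P).card := by
  rw [← Set.ncard_coe_finset]
  congr 1
  ext k
  simp only [Finset.coe_filter, Finset.mem_range, Nat.lt_add_one_iff, Set.mem_ofPred]

section densityRatio

variable (A : Set ℕ) (n : ℕ)

lemma densityRatio_nonneg : 0 ≤ densityRatio A n := by
  unfold densityRatio
  positivity

lemma densityRatio_le_two : densityRatio A n ≤ 2 := by
  classical
  rcases n.eq_zero_or_pos with rfl | hn
  · simp [densityRatio]
  have hcard : (((Finset.range (n + 1)).filter (· ∈ A)).card : ℝ) ≤ n + 1 := by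
    exact_mod_cast (Finset.card_filter_le _ _).trans (Finset.card_range _).le
  have hn' : (1 : ℝ) ≤ n := by exact_mod_cast hn
  rw [densityRatio, ncard_le_and_eq_card_filter, div_le_iff₀ (by positivity)]
  linarith

@[simp]
lemma densityRatio_empty : densityRatio ∅ n = 0 := by
  simp [densityRatio]

lemma densityRatio_le_ncard_div (hA : A.Finite) : densityRatio A n ≤ A.ncard / n :=
  div_le_div_of_nonneg_right
    (by exact_mod_cast Set.ncard_le_ncard (fun _ (hk : _ ∧ _) => hk.2) hA) (Nat.cast_nonneg n)

end densityRatio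

lemma ofReal_upperDensity (A : Set ℕ) :
    ENNReal.ofReal (upperDensity A) = limsup (fun n => ENNReal.ofReal (densityRatio A n)) atTop :=
  ENNReal.ofReal_limsup (isBoundedUnder_of ⟨0, densityRatio_nonneg A⟩).isCoboundedUnder_le
    (isBoundedUnder_of ⟨2, densityRatio_le_two A⟩)

lemma Set.Finite.upperDensity_eq_zero {A : Set ℕ} (hA : A.Finite) : upperDensity A = 0 :=
  (squeeze_zero (densityRatio_nonneg A) (densityRatio_le_ncard_div A · hA)
    (tendsto_const_div_atTop_nhds_zero_nat _)).limsup_eq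

section Measure

variable {α ι : Type*}

open Classical in
lemma densityRatio_sep_eq (S : Set ℕ) (B : ℕ → Set α) (n : ℕ) (x : α) :
    densityRatio {k ∈ S | x ∈ B k} n =
      ((((Finset.range (n + 1)).filter (· ∈ S)).filter (x ∈ B ·)).card : ℝ) / n := by
  rw [densityRatio, ncard_le_and_eq_card_filter, Finset.filter_filter]
  rfl

lemma ofReal_densityRatio_sep_le_indicator {S : Set ℕ} {B : ℕ → Set α} {I : Set α}
    (hBI : ∀ k ∈ S, B k ⊆ I) (n : ℕ) (x : α) :
    ENNReal.ofReal (densityRatio {k ∈ S | x ∈ B k} n) ≤ I.indicator 2 x := by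
  by_cases hx : x ∈ I
  · rw [Set.indicator_of_mem hx, Pi.ofNat_apply, ← ENNReal.ofReal_ofNat]
    exact ENNReal.ofReal_le_ofReal (densityRatio_le_two _ n)
  · have : {k ∈ S | x ∈ B k} = ∅ :=
      Set.eq_empty_of_forall_notMem fun k hk => hx (hBI k hk.1 hk.2)
    simp [this]

variable [MeasurableSpace α]

open Classical in
lemma measurable_card_filter_mem (F : Finset ι) {B : ι → Set α}
    (hB : ∀ k ∈ F, MeasurableSet (B k)) :
    Measurable fun x => (F.filter (x ∈ B ·)).card := by
  simp only [Finset.card_filter]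
  exact Finset.measurable_sum F fun k hk =>
    Measurable.ite (hB k hk) measurable_const measurable_const

open Classical in
lemma lintegral_card_filter_mem (μ : Measure α) (F : Finset ι) {B : ι → Set α}
    (hB : ∀ k ∈ F, MeasurableSet (B k)) :
    ∫⁻ x, ((F.filter (x ∈ B ·)).card : ℝ≥0∞) ∂μ = ∑ k ∈ F, μ (B k) := by
  have hind : ∀ x, ((F.filter (x ∈ B ·)).card : ℝ≥0∞) = ∑ k ∈ F, (B k).indicator 1 x := by
    intro x
    rw [Finset.card_filter]
    push_cast
    simp only [Set.indicator_apply, Pi.one_apply]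
  simp_rw [hind]
  rw [lintegral_finsetSum _ fun k hk => measurable_one.indicator (hB k hk)]
  exact Finset.sum_congr rfl fun k hk => lintegral_indicator_one (hB k hk)

variable {S : Set ℕ} {B : ℕ → Set α}

lemma measurable_densityRatio_sep (hB : ∀ k ∈ S, MeasurableSet (B k)) (n : ℕ) :
    Measurable fun x => densityRatio {k ∈ S | x ∈ B k} n := by
  classical
  simp_rw [densityRatio_sep_eq]
  exact (measurable_from_nat.comp (measurable_card_filter_mem _
    fun k hk => hB k (Finset.mem_filter.1 hk).2)).div_const _

lemma mul_densityRatio_le_lintegral (μ : Measure α) {ε : ℝ≥0∞}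
    (hB : ∀ k ∈ S, MeasurableSet (B k)) (hvol : ∀ k ∈ S, ε ≤ μ (B k)) (n : ℕ) :
    ε * ENNReal.ofReal (densityRatio S n) ≤
      ∫⁻ x, ENNReal.ofReal (densityRatio {k ∈ S | x ∈ B k} n) ∂μ := by
  classical
  rcases n.eq_zero_or_pos with rfl | hn
  · simp [densityRatio]
  set F := (Finset.range (n + 1)).filter (· ∈ S)
  have hF : ∀ k ∈ F, MeasurableSet (B k) := fun k hk => hB k (Finset.mem_filter.1 hk).2
  have hofReal (m : ℕ) : ENNReal.ofReal (m / n) = m * (n : ℝ≥0∞)⁻¹ := by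
    rw [ENNReal.ofReal_div_of_pos (by positivity), ENNReal.ofReal_natCast,
      ENNReal.ofReal_natCast, div_eq_mul_inv]
  simp_rw [densityRatio_sep_eq, densityRatio, ncard_le_and_eq_card_filter, hofReal]
  calc ε * (F.card * (n : ℝ≥0∞)⁻¹) = (∑ _k ∈ F, ε) * (n : ℝ≥0∞)⁻¹ := by
        rw [Finset.sum_const, nsmul_eq_mul, mul_assoc, mul_left_comm]
    _ ≤ (∑ k ∈ F, μ (B k)) * (n : ℝ≥0∞)⁻¹ := by
        gcongr with k hk
        exact hvol k (Finset.mem_filter.1 hk).2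
    _ = ∫⁻ x, (F.filter (x ∈ B ·)).card * (n : ℝ≥0∞)⁻¹ ∂μ := by
        rw [lintegral_mul_const' _ _ (ENNReal.inv_ne_top.2 (by positivity)),
          lintegral_card_filter_mem μ F hF]

end Measure

/-- Let `S ⊆ ℕ` have positive upper density, `δ > 0`, and for each `n ∈ S`
let `B n ⊆ (0,2]` be Lebesgue measurable with `m(B n) > δ`. Then there exists `t ∈ (0,2]`
such that `{n ∈ S : t ∈ B n}` has positive upper density; in particular it is infinite. -/
theorem stmt8 (S : Set ℕ)
    (hS : 0 < limsup (fun n : ℕ => ({k | k ≤ n ∧ k ∈ S}.ncard : ℝ) / n) atTop)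
    (δ : ℝ) (hδ : 0 < δ) (B : ℕ → Set ℝ)
    (hBmeas : ∀ n ∈ S, MeasurableSet (B n))
    (hBsub : ∀ n ∈ S, B n ⊆ Set.Ioc 0 2)
    (hBvol : ∀ n ∈ S, ENNReal.ofReal δ < volume (B n)) :
    ∃ t ∈ Set.Ioc (0 : ℝ) 2,
      0 < limsup (fun n : ℕ => ({k | k ≤ n ∧ k ∈ S ∧ t ∈ B k}.ncard : ℝ) / n) atTop ∧
      {n ∈ S | t ∈ B n}.Infinite := by
  set f : ℕ → ℝ → ℝ≥0∞ := fun n t => ENNReal.ofReal (densityRatio {k ∈ S | t ∈ B k} n)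
  have hbound := ofReal_densityRatio_sep_le_indicator hBsub
  have hfin : ∫⁻ t, (Set.Ioc (0 : ℝ) 2).indicator 2 t ≠ ⊤ := by
    simp [lintegral_indicator measurableSet_Ioc, ENNReal.mul_eq_top]
  have hlint : 0 < ∫⁻ t, limsup (fun n => f n t) atTop := calc
    0 < ENNReal.ofReal δ * ENNReal.ofReal (upperDensity S) :=
      ENNReal.mul_pos (ENNReal.ofReal_pos.2 hδ).ne' (ENNReal.ofReal_pos.2 hS).ne'
    _ = limsup (fun n => ENNReal.ofReal δ * ENNReal.ofReal (densityRatio S n)) atTop := by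
      rw [ofReal_upperDensity, ENNReal.limsup_const_mul_of_ne_top ENNReal.ofReal_ne_top]
    _ ≤ limsup (fun n => ∫⁻ t, f n t) atTop :=
      limsup_le_limsup (.of_forall fun n => mul_densityRatio_le_lintegral volume hBmeas
        (fun k hk => (hBvol k hk).le) n)
    _ ≤ ∫⁻ t, limsup (fun n => f n t) atTop :=
      limsup_lintegral_le _ (fun n => (measurable_densityRatio_sep hBmeas n).ennreal_ofReal)
        (fun n => .of_forall (hbound n)) hfin
  obtain ⟨t, ht⟩ : ∃ t, limsup (fun n => f n t) atTop ≠ 0 := by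
    by_contra! h
    simp [h] at hlint
  have htI : t ∈ Set.Ioc (0 : ℝ) 2 :=
    Set.mem_of_indicator_ne_zero (pos_iff_ne_zero.2 ht |>.trans_le
      (limsup_le_of_le (by isBoundedDefault) (.of_forall (hbound · t)))).ne'
  have hpos : 0 < upperDensity {n ∈ S | t ∈ B n} := by
    rw [← ENNReal.ofReal_pos, ofReal_upperDensity]
    exact pos_iff_ne_zero.2 ht
  exact ⟨t, htI, hpos, fun hfin => hpos.ne' hfin.upperDensity_eq_zero⟩
end
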